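/- arXiv:2502.06625 — 5 statements merged into one kernel-verified Lean document; each statement's English description precedes it below -/
import Mathlib

section
/- Let γ, E₁, E₂, x ∈ ℝ³ and let c > 0 be a real number satisfying the equal travel-time condition c‖x−γ‖ + ‖c(x−γ) + γ − E₁‖ = ‖x−γ‖ + ‖x−E₂‖. Then 2c·(⟨x−γ, γ−E₁⟩ + ‖x−γ‖(‖x−γ‖+‖x−E₂‖)) = (‖x−γ‖+‖x−E₂‖)² − ‖γ−E₁‖²; in particular, if the denominator D := ⟨x−γ, γ−E₁⟩ + ‖x−γ‖(‖x−γ‖+‖x−E₂‖) is nonzero, then c = N/(2D) with N := (‖x−γ‖+‖x−E₂‖)² − ‖γ−E₁‖². -/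
/-! Writing `z - E₁ = c • (x - γ) + (γ - E₁)` and squaring `‖z - E₁‖ = s - c‖x - γ‖`, where
`s = ‖x - γ‖ + ‖x - E₂‖`, the term `c²‖x - γ‖²` occurs on both sides and cancels, which leaves an
equation linear in `c`. -/

theorem two_mul_inner_add_norm_mul_eq_of_mul_norm_add_norm_smul_add_eq
    {E : Type*} [NormedAddCommGroup E] [InnerProductSpace ℝ E] {u v : E} {c s : ℝ}
    (h : c * ‖u‖ + ‖c • u + v‖ = s) :
    2 * c * (inner ℝ u v + ‖u‖ * s) = s ^ 2 - ‖v‖ ^ 2 := by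
  have hsq : ‖c • u + v‖ ^ 2 = c ^ 2 * ‖u‖ ^ 2 + 2 * c * inner ℝ u v + ‖v‖ ^ 2 := by
    rw [norm_add_sq_real, norm_smul, mul_pow, Real.norm_eq_abs, sq_abs, real_inner_smul_left]
    ring
  subst h
  linear_combination -hsq

theorem stmt_3_general (γ E₁ E₂ x : EuclideanSpace ℝ (Fin 3)) (c : ℝ)
    (h : c * ‖x - γ‖ + ‖c • (x - γ) + γ - E₁‖ = ‖x - γ‖ + ‖x - E₂‖) :
    2 * c * ((inner ℝ (x - γ) (γ - E₁) : ℝ) + ‖x - γ‖ * (‖x - γ‖ + ‖x - E₂‖)) =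
      (‖x - γ‖ + ‖x - E₂‖) ^ 2 - ‖γ - E₁‖ ^ 2 ∧
    ((inner ℝ (x - γ) (γ - E₁) : ℝ) + ‖x - γ‖ * (‖x - γ‖ + ‖x - E₂‖) ≠ 0 →
      c = ((‖x - γ‖ + ‖x - E₂‖) ^ 2 - ‖γ - E₁‖ ^ 2) /
        (2 * ((inner ℝ (x - γ) (γ - E₁) : ℝ) + ‖x - γ‖ * (‖x - γ‖ + ‖x - E₂‖)))) := by
  rw [add_sub_assoc] at h
  have key := two_mul_inner_add_norm_mul_eq_of_mul_norm_add_norm_smul_add_eq h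
  refine ⟨key, fun hD => ?_⟩
  rw [eq_div_iff (mul_ne_zero two_ne_zero hD), ← key]
  ring

theorem stmt_3 (γ E₁ E₂ x : EuclideanSpace ℝ (Fin 3)) (c : ℝ) (hc : 0 < c)
    (h : c * ‖x - γ‖ + ‖c • (x - γ) + γ - E₁‖ = ‖x - γ‖ + ‖x - E₂‖) :
    2 * c * ((inner ℝ (x - γ) (γ - E₁) : ℝ) + ‖x - γ‖ * (‖x - γ‖ + ‖x - E₂‖)) =
      (‖x - γ‖ + ‖x - E₂‖) ^ 2 - ‖γ - E₁‖ ^ 2 ∧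
    ((inner ℝ (x - γ) (γ - E₁) : ℝ) + ‖x - γ‖ * (‖x - γ‖ + ‖x - E₂‖) ≠ 0 →
      c = ((‖x - γ‖ + ‖x - E₂‖) ^ 2 - ‖γ - E₁‖ ^ 2) /
        (2 * ((inner ℝ (x - γ) (γ - E₁) : ℝ) + ‖x - γ‖ * (‖x - γ‖ + ‖x - E₂‖)))) :=
  stmt_3_general γ E₁ E₂ x c h
end

section
/- Let γ, E₁, E₂, x ∈ ℝ³ with D := ⟨x−γ, γ−E₁⟩ + ‖x−γ‖(‖x−γ‖+‖x−E₂‖) > 0, and let c := N/(2D) where N := (‖x−γ‖+‖x−E₂‖)² − ‖γ−E₁‖². Then c = 1 if and only if ‖x−E₁‖ = ‖x−E₂‖; that is, the fixed locus of the artifact map corresponds exactly to the plane π of points equidistant from the two emitters E₁ and E₂. -/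
/-!
Expanding `x - E₁ = (x - γ) + (γ - E₁)` shows that `2D - N = ‖x - E₁‖² - ‖x - E₂‖²`,
so for `D ≠ 0` the scaling factor `c = N / (2D)` equals `1` exactly when the two
distances to the emitters agree.
-/

section

variable {V : Type*} [NormedAddCommGroup V] [InnerProductSpace ℝ V]

theorem norm_sub_sq_eq_norm_sub_sq_add_inner (x y z : V) :
    ‖x - z‖ ^ 2 = ‖x - y‖ ^ 2 + 2 * inner ℝ (x - y) (y - z) + ‖y - z‖ ^ 2 := by
  rw [← norm_add_sq_real, sub_add_sub_cancel]

theorem two_mul_denominator_sub_numerator (γ E₁ E₂ x : V) :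
    2 * (inner ℝ (x - γ) (γ - E₁) + ‖x - γ‖ * (‖x - γ‖ + ‖x - E₂‖))
        - ((‖x - γ‖ + ‖x - E₂‖) ^ 2 - ‖γ - E₁‖ ^ 2)
      = ‖x - E₁‖ ^ 2 - ‖x - E₂‖ ^ 2 := by
  rw [norm_sub_sq_eq_norm_sub_sq_add_inner x γ E₁]
  ring

end

theorem stmt_5 (γ E₁ E₂ x : EuclideanSpace ℝ (Fin 3))
    (N D c : ℝ)
    (hN : N = (‖x - γ‖ + ‖x - E₂‖) ^ 2 - ‖γ - E₁‖ ^ 2)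
    (hD : D = (inner ℝ (x - γ) (γ - E₁) : ℝ) + ‖x - γ‖ * (‖x - γ‖ + ‖x - E₂‖))
    (hDpos : 0 < D) (hc : c = N / (2 * D)) :
    c = 1 ↔ ‖x - E₁‖ = ‖x - E₂‖ := by
  have hgap : 2 * D - N = ‖x - E₁‖ ^ 2 - ‖x - E₂‖ ^ 2 := by
    rw [hD, hN, two_mul_denominator_sub_numerator]
  rw [hc, div_eq_one_iff_eq (by positivity), ← sq_eq_sq₀ (norm_nonneg _) (norm_nonneg _)]
  constructor <;> intro h <;> linarith
end

section
/- Let γ, E₁, E₂, x ∈ ℝ³ with D := ⟨x−γ, γ−E₁⟩ + ‖x−γ‖(‖x−γ‖+‖x−E₂‖) > 0, and let c := N/(2D) where N := (‖x−γ‖+‖x−E₂‖)² − ‖γ−E₁‖². Then c < 1 if and only if ‖x−E₂‖ < ‖x−E₁‖, and c > 1 if and only if ‖x−E₂‖ > ‖x−E₁‖. -/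
/-! Expanding `‖x - E₁‖² = ‖(x - γ) + (γ - E₁)‖²` shows `N - 2D = ‖x - E₂‖² - ‖x - E₁‖²`,
so for `D > 0` the sign of `c - 1 = (N - 2D) / (2D)` is that of `‖x - E₂‖ - ‖x - E₁‖`. -/

open RealInnerProductSpace

theorem sq_add_norm_sub_sq_sub_two_mul_eq_sq_sub_sq {E : Type*} [NormedAddCommGroup E]
    [InnerProductSpace ℝ E] (γ E₁ E₂ x : E) :
    (‖x - γ‖ + ‖x - E₂‖) ^ 2 - ‖γ - E₁‖ ^ 2
        - 2 * (⟪x - γ, γ - E₁⟫ + ‖x - γ‖ * (‖x - γ‖ + ‖x - E₂‖))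
      = ‖x - E₂‖ ^ 2 - ‖x - E₁‖ ^ 2 := by
  rw [← sub_add_sub_cancel x γ E₁, norm_add_sq_real]
  ring

theorem stmt_6 (γ E₁ E₂ x : EuclideanSpace ℝ (Fin 3))
    (N D c : ℝ)
    (hN : N = (‖x - γ‖ + ‖x - E₂‖) ^ 2 - ‖γ - E₁‖ ^ 2)
    (hD : D = (inner ℝ (x - γ) (γ - E₁) : ℝ) + ‖x - γ‖ * (‖x - γ‖ + ‖x - E₂‖))
    (hDpos : 0 < D) (hc : c = N / (2 * D)) :
    (c < 1 ↔ ‖x - E₂‖ < ‖x - E₁‖) ∧ (c > 1 ↔ ‖x - E₂‖ > ‖x - E₁‖) := by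
  have h2D : 0 < 2 * D := by positivity
  have hgap : N - 2 * D = ‖x - E₂‖ ^ 2 - ‖x - E₁‖ ^ 2 := by
    rw [hN, hD]
    exact sq_add_norm_sub_sq_sub_two_mul_eq_sq_sub_sq γ E₁ E₂ x
  rw [hc, gt_iff_lt, gt_iff_lt, div_lt_one h2D, one_lt_div h2D,
    ← sq_lt_sq₀ (norm_nonneg _) (norm_nonneg _), ← sq_lt_sq₀ (norm_nonneg _) (norm_nonneg _)]
  constructor <;> constructor <;> intro <;> linarith
end

section
/- Let γ, E₁, E₂, z ∈ ℝ³, and suppose z does not lie on the closed segment joining γ and E₂. Let c be a real number with 0 < c < 1, set z̃ := c(z−γ) + γ, and assume the equal travel-time condition ‖z−γ‖ + ‖z−E₂‖ = ‖z̃−γ‖ + ‖z̃−E₁‖. Then ‖z̃−E₂‖ < ‖z̃−E₁‖; that is, the displaced artifact z̃ lies on the same side of the plane of points equidistant from E₁ and E₂ as a point satisfying ‖z−E₂‖ < ‖z−E₁‖. -/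
theorem stmt_7 (γ E₁ E₂ z : EuclideanSpace ℝ (Fin 3))
    (hz : z ∉ segment ℝ γ E₂)
    (c : ℝ) (hc0 : 0 < c) (hc1 : c < 1)
    (z' : EuclideanSpace ℝ (Fin 3)) (hz' : z' = c • (z - γ) + γ)
    (ht : ‖z - γ‖ + ‖z - E₂‖ = ‖z' - γ‖ + ‖z' - E₁‖) :
    ‖z' - E₂‖ < ‖z' - E₁‖ := by
  have hzz' : z' - z = (c - 1) • (z - γ) := by
    rw [hz']; module
  have hzg : z' - γ = c • (z - γ) := by
    rw [hz']; abel
  have h1 : ‖z' - z‖ = (1 - c) * ‖z - γ‖ := by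
    rw [hzz', norm_smul, Real.norm_eq_abs, abs_of_nonpos (by linarith)]
    ring
  have h2 : ‖z' - γ‖ = c * ‖z - γ‖ := by
    rw [hzg, norm_smul, Real.norm_eq_abs, abs_of_pos hc0]
  have hE1 : ‖z' - E₁‖ = ‖z' - z‖ + ‖z - E₂‖ := by
    rw [h1]; linarith [ht, h2]
  -- z not on segment from z' to E₂
  have hns : z ∉ segment ℝ z' E₂ := by
    rintro ⟨a, b, ha, hb, hab, habz⟩
    apply hz
    rw [hz'] at habz
    have hac : a * c < 1 := by nlinarith
    have hd : (0:ℝ) < 1 - a * c := by linarith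
    have key : (a * (1 - c)) • γ + b • E₂ + (a * c) • z
        = a • (c • (z - γ) + γ) + b • E₂ := by module
    have key2 : (a * (1 - c)) • γ + b • E₂ + (a * c) • z = z := key.trans habz
    have hkey : (a * (1 - c)) • γ + b • E₂ = (1 - a * c) • z := by
      rw [sub_smul, one_smul, eq_sub_iff_add_eq]; exact key2
    refine ⟨a * (1 - c) / (1 - a * c), b / (1 - a * c),
      div_nonneg (mul_nonneg ha (by linarith)) hd.le, div_nonneg hb hd.le, ?_, ?_⟩
    · field_simp
      linarith
    · have hzrep : z = (1 - a * c)⁻¹ • ((a * (1 - c)) • γ + b • E₂) := by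
        rw [hkey, smul_smul, inv_mul_cancel₀ hd.ne', one_smul]
      rw [hzrep, smul_add, smul_smul, smul_smul, div_eq_inv_mul, div_eq_inv_mul]
  -- strict triangle inequality
  have htri : ‖z' - E₂‖ ≤ ‖z' - z‖ + ‖z - E₂‖ := by
    simpa [dist_eq_norm] using dist_triangle z' z E₂
  rcases lt_or_eq_of_le htri with h | h
  · rw [hE1]; exact h
  · exfalso
    apply hns
    have hw : dist z' z + dist z E₂ = dist z' E₂ := by
      simp [dist_eq_norm, ← h]
    exact (dist_add_dist_eq_iff.mp hw).mem_segment
end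

section
/- Let γ, E₁, E₂, z ∈ ℝ³, and suppose z does not lie on the closed segment joining γ and E₂. Let c be a real number with c > 1, set z̃ := c(z−γ) + γ, and assume the equal travel-time condition ‖z−γ‖ + ‖z−E₂‖ = ‖z̃−γ‖ + ‖z̃−E₁‖. Then ‖z̃−E₂‖ > ‖z̃−E₁‖; that is, the displaced artifact z̃ lies on the same side of the plane of points equidistant from E₁ and E₂ as a point satisfying ‖z−E₂‖ > ‖z−E₁‖. -/
/-!
Going out along the ray from `γ` through `z` to `z'` costs exactly `dist z z'` in the distance to
`γ`, so equal travel time forces `dist z' E₁ = dist z E₂ - dist z z'`. By the triangle inequality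
this is at most `dist z' E₂`, and equality would put `z'` between `z` and `E₂`, hence (as `z` lies
between `γ` and `z'`) `z` between `γ` and `E₂`.
-/

open AffineMap

section StrictConvex

variable {V P : Type*} [NormedAddCommGroup V] [NormedSpace ℝ V] [StrictConvexSpace ℝ V]
  [MetricSpace P] [NormedAddTorsor V P]

theorem dist_lt_dist_add_dist_of_wbtw_of_not_wbtw {γ z z' e : P} (hγzz' : Wbtw ℝ γ z z')
    (hzz' : z ≠ z') (hz : ¬Wbtw ℝ γ z e) : dist z e < dist z z' + dist z' e :=
  (dist_triangle z z' e).lt_of_ne fun heq =>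
    hz (hγzz'.trans_expand_left (dist_add_dist_eq_iff.1 heq.symm) hzz')

theorem dist_lt_dist_of_wbtw_of_dist_add_dist_eq {γ e₁ e₂ z z' : P} (hγzz' : Wbtw ℝ γ z z')
    (hzz' : z ≠ z') (hz : ¬Wbtw ℝ γ z e₂)
    (ht : dist z γ + dist z e₂ = dist z' γ + dist z' e₁) : dist z' e₁ < dist z' e₂ := by
  have hray : dist γ z + dist z z' = dist γ z' := hγzz'.dist_add_dist
  have htri := dist_lt_dist_add_dist_of_wbtw_of_not_wbtw hγzz' hzz' hz
  rw [dist_comm z γ, dist_comm z' γ] at ht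
  linarith

end StrictConvex

theorem stmt_8 (γ E₁ E₂ z : EuclideanSpace ℝ (Fin 3))
    (hz : z ∉ segment ℝ γ E₂)
    (c : ℝ) (hc1 : 1 < c)
    (z' : EuclideanSpace ℝ (Fin 3)) (hz' : z' = c • (z - γ) + γ)
    (ht : ‖z - γ‖ + ‖z - E₂‖ = ‖z' - γ‖ + ‖z' - E₁‖) :
    ‖z' - E₂‖ > ‖z' - E₁‖ := by
  rw [mem_segment_iff_wbtw] at hz
  have hzγ : z ≠ γ := fun h => hz (h ▸ wbtw_self_left ℝ γ E₂)
  have hz'_eq : z' = lineMap γ z c := by rw [hz', lineMap_apply_module']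
  have hγzz' : Wbtw ℝ γ z z' :=
    wbtw_iff_left_eq_or_right_mem_image_Ici.2 (.inr ⟨c, hc1.le, hz'_eq.symm⟩)
  have hzz' : z ≠ z' := by
    rw [hz'_eq, ne_comm, Ne, lineMap_eq_right_iff, not_or]
    exact ⟨hzγ.symm, hc1.ne'⟩
  simp only [← dist_eq_norm] at ht ⊢
  exact dist_lt_dist_of_wbtw_of_dist_add_dist_eq hγzz' hzz' hz ht
end
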